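/- arXiv:2605.25082 — 4 statements merged into one kernel-verified Lean document; each statement's English description precedes it below -/
import Mathlib

section
/- Let γ be a homeomorphism of a compact metric space Z with exactly two fixed points γ⁺ and γ⁻, such that for every z ∈ Z with z ≠ γ⁻ the iterates γⁿ(z) converge to γ⁺ as n → +∞, and for every z ≠ γ⁺ the iterates γⁿ(z) converge to γ⁻ as n → −∞ (north-south dynamics). Let g be a homeomorphism of S¹ and f : S¹ → Z a continuous surjective map with f ∘ g = γ ∘ f. Then some power gᵏ (k ≥ 1) of g has a fixed point in S¹. -/
/-!
Put `A = f⁻¹{γ⁺}` and `B = f⁻¹{γ⁻}`: disjoint nonempty closed subsets of the circle, with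
`g⁻¹ A = A` and `g B ⊆ B`. If a lift of `g` has degree `≠ 1`, the intermediate value theorem
gives a fixed point. Otherwise `g` lifts to a continuous injective `CircleDeg1Lift` `F`, and
`A` lifts to a closed `1`-periodic `F`-invariant set `Â ⊆ ℝ`. A lift `x` of a point of `B`
lies in a gap `(a, b)` of `Â`; the gaps `Fⁿ (a, b)`, translated into `[0, 2]`, are again gaps,
and two of them share an endpoint only if `a` is periodic modulo `1`. Failing that, they are
pairwise disjoint, so their lengths tend to `0`, and `gⁿ` maps a point of `B` arbitrarily close
to a point of `A`, contradicting `dist A B > 0`.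
-/

open Set Filter Function Topology

local notation "𝕋" => AddCircle (1 : ℝ)

theorem AddCircle.exists_continuous_lift {φ : 𝕋 → 𝕋} (hφ : Continuous φ) :
    ∃ L : ℝ → ℝ, Continuous L ∧ ∀ x : ℝ, (L x : 𝕋) = φ x := by
  obtain ⟨e, he⟩ := QuotientAddGroup.mk_surjective (φ ((0 : ℝ) : 𝕋))
  obtain ⟨L, ⟨-, hL⟩, -⟩ :=
    (AddCircle.isCoveringMap_coe (1 : ℝ)).existsUnique_continuousMap_lifts
      ⟨fun x : ℝ => φ x, hφ.comp continuous_quotient_mk'⟩ (0 : ℝ) e he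
  exact ⟨L, L.continuous, congrFun hL⟩

theorem AddCircle.coe_eq_coe_iff_exists_int {x y : ℝ} : (x : 𝕋) = y ↔ ∃ m : ℤ, y = x + m := by
  rw [eq_comm, QuotientAddGroup.eq_iff_sub_mem, AddSubgroup.mem_zmultiples_iff]
  simp [sub_eq_iff_eq_add', eq_comm]

theorem exists_int_map_add_one_of_lift {φ : 𝕋 → 𝕋} {L : ℝ → ℝ} (hL : Continuous L)
    (hlift : ∀ x : ℝ, (L x : 𝕋) = φ x) : ∃ d : ℤ, ∀ x, L (x + 1) = L x + d := by
  have hdisc : IsDiscrete (AddSubgroup.zmultiples (1 : ℝ) : Set ℝ) :=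
    isDiscrete_iff_discreteTopology.mpr
      (inferInstanceAs (DiscreteTopology (AddSubgroup.zmultiples (1 : ℝ))))
  have hmaps : MapsTo (fun x => L (x + 1) - L x) univ (AddSubgroup.zmultiples (1 : ℝ)) := by
    intro x _
    rw [SetLike.mem_coe, ← QuotientAddGroup.eq_zero_iff, QuotientAddGroup.mk_sub]
    simp [hlift]
  obtain ⟨d, hd⟩ := AddSubgroup.mem_zmultiples_iff.mp (hmaps (mem_univ 0))
  refine ⟨d, fun x => ?_⟩
  have := isPreconnected_univ.constant_of_mapsTo hdisc (by fun_prop) hmaps (mem_univ x)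
    (mem_univ 0)
  simp only [zero_add, zsmul_one] at this hd
  linarith

theorem exists_eq_add_int_of_map_add_one_ne {L : ℝ → ℝ} (hL : Continuous L) {d : ℤ}
    (hd : ∀ x, L (x + 1) = L x + d) (hd1 : d ≠ 1) : ∃ x : ℝ, ∃ m : ℤ, L x = x + m := by
  set H : ℝ → ℝ := fun x => L x - x
  have hH1 : H 1 = H 0 + (d - 1) := by simp only [H]; linarith [zero_add (1 : ℝ) ▸ hd 0]
  obtain ⟨m, hm⟩ : ∃ m : ℤ, (m : ℝ) ∈ uIcc (H 0) (H 1) := by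
    rcases lt_or_gt_of_ne hd1 with hd1 | hd1
    · have : (d : ℝ) ≤ 0 := by exact_mod_cast Int.lt_add_one_iff.mp hd1
      exact ⟨⌊H 0⌋, mem_uIcc_of_ge (by linarith [Int.sub_one_lt_floor (H 0)])
        (Int.floor_le _)⟩
    · have : (2 : ℝ) ≤ d := by exact_mod_cast hd1
      exact ⟨⌈H 0⌉, mem_uIcc_of_le (Int.le_ceil _)
        (by linarith [Int.ceil_lt_add_one (H 0)])⟩
  obtain ⟨x, -, hx⟩ := intermediate_value_uIcc (by fun_prop : Continuous H).continuousOn hm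
  exact ⟨x, m, by linarith [show L x - x = m from hx]⟩

theorem map_add_int_of_map_add_one {L : ℝ → ℝ} (h : ∀ x, L (x + 1) = L x + 1) (x : ℝ)
    (m : ℤ) : L (x + m) = L x + m := by
  induction m using Int.induction_on generalizing x with
  | zero => simp
  | succ n ih => push_cast at ih ⊢; rw [← add_assoc, h, ih, add_assoc]
  | pred n ih =>
    have := h (x + (-n - 1 : ℤ))
    push_cast at ih this ⊢
    rw [add_assoc, sub_add_cancel, ih] at this
    linarith

theorem exists_isFixedPt_or_circleDeg1Lift (g : 𝕋 ≃ₜ 𝕋) :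
    (∃ p, IsFixedPt g p) ∨ ∃ F : CircleDeg1Lift, Continuous F ∧ Injective F ∧
      ∀ x : ℝ, (F x : 𝕋) = g x := by
  obtain ⟨L, hL, hlift⟩ := AddCircle.exists_continuous_lift g.continuous
  obtain ⟨d, hd⟩ := exists_int_map_add_one_of_lift hL hlift
  by_cases hd1 : d = 1
  · subst hd1
    simp only [Int.cast_one] at hd
    have hinj : Injective L := by
      intro u v huv
      have huv' : (u : 𝕋) = v := g.injective (by rw [← hlift u, ← hlift v, huv])
      obtain ⟨m, rfl⟩ := AddCircle.coe_eq_coe_iff_exists_int.mp huv'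
      rw [map_add_int_of_map_add_one hd, left_eq_add, Int.cast_eq_zero] at huv
      simp [huv]
    have hmono : StrictMono L := (hL.strictMono_of_inj hinj).resolve_right fun hanti =>
      (hanti (lt_add_one (0 : ℝ))).not_ge (by rw [hd]; linarith)
    exact Or.inr ⟨⟨⟨L, hmono.monotone⟩, hd⟩, hL, hinj, hlift⟩
  · obtain ⟨x, m, hx⟩ := exists_eq_add_int_of_map_add_one_ne hL hd hd1
    exact Or.inl ⟨x, by simp [IsFixedPt, ← hlift, hx]⟩

theorem AddCircle.dist_coe_le {p : ℝ} (x y : ℝ) : dist (x : AddCircle p) y ≤ dist x y := by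
  simpa only [dist_eq_norm, ← QuotientAddGroup.mk_sub] using QuotientAddGroup.norm_mk_le_norm

def IsGap (A : Set ℝ) (a b : ℝ) : Prop := a ∈ A ∧ b ∈ A ∧ Disjoint (Ioo a b) A

namespace IsGap

variable {A : Set ℝ} {a b c d : ℝ}

theorem left_eq_of_not_disjoint (h₁ : IsGap A a b) (h₂ : IsGap A c d)
    (h : ¬Disjoint (Ioo a b) (Ioo c d)) : a = c := by
  obtain ⟨t, ⟨hat, htb⟩, hct, htd⟩ := not_disjoint_iff.mp h
  rcases lt_trichotomy a c with hac | hac | hac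
  · exact (disjoint_left.mp h₁.2.2 ⟨hac, hct.trans htb⟩ h₂.1).elim
  · exact hac
  · exact (disjoint_left.mp h₂.2.2 ⟨hac, hat.trans htd⟩ h₁.1).elim

theorem image {φ : ℝ → ℝ} (hmono : StrictMono φ) (hsurj : Surjective φ)
    (hA : ∀ x, φ x ∈ A ↔ x ∈ A) (h : IsGap A a b) : IsGap A (φ a) (φ b) := by
  refine ⟨(hA a).mpr h.1, (hA b).mpr h.2.1, disjoint_left.mpr ?_⟩
  rintro _ ⟨hay, hyb⟩ hy
  obtain ⟨y, rfl⟩ := hsurj ‹ℝ›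
  exact disjoint_left.mp h.2.2 ⟨hmono.lt_iff_lt.mp hay, hmono.lt_iff_lt.mp hyb⟩ ((hA y).mp hy)

theorem add_int (hA : ∀ (x : ℝ) (m : ℤ), x + m ∈ A ↔ x ∈ A) (h : IsGap A a b) (m : ℤ) :
    IsGap A (a + m) (b + m) :=
  h.image (strictMono_id.add_const _) (add_right_surjective _) (hA · m)

theorem le_add_one (hA : ∀ (x : ℝ) (m : ℤ), x + m ∈ A ↔ x ∈ A) (h : IsGap A a b) :
    b ≤ a + 1 := by
  by_contra! hb
  have ha₁ : a + (1 : ℤ) ∈ A := (hA a 1).mpr h.1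
  exact disjoint_left.mp h.2.2 ⟨by simp, by simpa using hb⟩ ha₁

end IsGap

theorem exists_isGap_mem {A : Set ℝ} (hA : IsClosed A)
    (hper : ∀ (x : ℝ) (m : ℤ), x + m ∈ A ↔ x ∈ A) (hA₀ : A.Nonempty) {x : ℝ} (hx : x ∉ A) :
    ∃ a b, IsGap A a b ∧ x ∈ Ioo a b := by
  obtain ⟨y, hy⟩ := hA₀
  have hbelow : y + (-⌈y - x⌉ : ℤ) ∈ A ∩ Iic x :=
    ⟨(hper y _).mpr hy, mem_Iic.mpr (by push_cast; linarith [Int.le_ceil (y - x)])⟩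
  have habove : y + (⌈x - y⌉ : ℤ) ∈ A ∩ Ici x :=
    ⟨(hper y _).mpr hy, mem_Ici.mpr (by linarith [Int.le_ceil (x - y)])⟩
  have ha := (hA.inter isClosed_Iic).csSup_mem ⟨_, hbelow⟩ ⟨x, fun _ h => h.2⟩
  have hb := (hA.inter isClosed_Ici).csInf_mem ⟨_, habove⟩ ⟨x, fun _ h => h.2⟩
  refine ⟨_, _, ⟨ha.1, hb.1, disjoint_left.mpr fun z hz hzA => ?_⟩,
    lt_of_le_of_ne ha.2 fun h => hx (h ▸ ha.1), lt_of_le_of_ne' hb.2 fun h => hx (h ▸ hb.1)⟩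
  rcases le_total z x with hzx | hxz
  · exact hz.1.not_ge (le_csSup ⟨x, fun _ h => h.2⟩ ⟨hzA, hzx⟩)
  · exact hz.2.not_ge (csInf_le ⟨x, fun _ h => h.2⟩ ⟨hzA, hxz⟩)

open MeasureTheory in
theorem tendsto_sub_atTop_zero_of_pairwise_disjoint_Ioo {u v : ℕ → ℝ} {c d : ℝ}
    (huv : ∀ n, u n ≤ v n) (hsub : ∀ n, Ioo (u n) (v n) ⊆ Icc c d)
    (hdisj : Pairwise (Disjoint on fun n => Ioo (u n) (v n))) :
    Tendsto (fun n => v n - u n) atTop (𝓝 0) := by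
  have hsum : ∑' n, volume (Ioo (u n) (v n)) ≠ ⊤ := by
    rw [← measure_iUnion hdisj fun _ => measurableSet_Ioo]
    exact ((measure_mono (iUnion_subset hsub)).trans_lt measure_Icc_lt_top).ne
  have := (ENNReal.tendsto_toReal ENNReal.zero_ne_top).comp
    (ENNReal.tendsto_atTop_zero_of_tsum_ne_top hsum)
  refine this.congr fun n => ?_
  simp [Real.volume_Ioo, ENNReal.toReal_ofReal (sub_nonneg.mpr (huv n))]

namespace CircleDeg1Lift

variable (F : CircleDeg1Lift)

theorem iterate_sub_eq_add_int_of_iterate_add_int_eq (hF : Injective F) {n n' : ℕ}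
    (hnn : n ≤ n') {y : ℝ} {m m' : ℤ} (h : F^[n'] y + m' = F^[n] y + m) :
    F^[n' - n] y = y + (m - m' : ℤ) := by
  rw [← Nat.add_sub_cancel' hnn, iterate_add_apply, ← eq_sub_iff_add_eq, add_sub_assoc,
    ← Int.cast_sub, ← coe_pow, ← map_add_int, coe_pow] at h
  exact hF.iterate n h

theorem iterate_mem_iff {A : Set ℝ} (hFA : ∀ x, F x ∈ A ↔ x ∈ A) (n : ℕ) (x : ℝ) :
    F^[n] x ∈ A ↔ x ∈ A := by
  induction n generalizing x with
  | zero => rfl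
  | succ n ih => rw [iterate_succ_apply, ih, hFA]

theorem exists_dist_iterate_lt_of_invariant (hF : Continuous F) (hFi : Injective F)
    (hper : ∀ n, 0 < n → ∀ (y : ℝ) (m : ℤ), F^[n] y ≠ y + m) {A : Set ℝ} (hA : IsClosed A)
    (hAper : ∀ (x : ℝ) (m : ℤ), x + m ∈ A ↔ x ∈ A) (hFA : ∀ x, F x ∈ A ↔ x ∈ A)
    (hA₀ : A.Nonempty) {x : ℝ} (hx : x ∉ A) {δ : ℝ} (hδ : 0 < δ) :
    ∃ n, ∃ a ∈ A, dist (F^[n] x) a < δ := by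
  obtain ⟨a, b, hgap, hxab⟩ := exists_isGap_mem hA hAper hA₀ hx
  have hFmono := F.strictMono_iff_injective.mpr hFi
  have hFsurj := F.continuous_iff_surjective.mp hF
  set s : ℕ → ℤ := fun n => -⌊F^[n] a⌋
  have hgaps (n : ℕ) : IsGap A (F^[n] a + s n) (F^[n] b + s n) :=
    (hgap.image (hFmono.iterate n) (hFsurj.iterate n) (F.iterate_mem_iff hFA n)).add_int hAper _
  have hdisj : Pairwise (Disjoint on fun n => Ioo (F^[n] a + s n) (F^[n] b + s n)) := by
    intro n n' hnn'
    by_contra hnd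
    have heq := (hgaps n).left_eq_of_not_disjoint (hgaps n') hnd
    rcases lt_or_gt_of_ne hnn' with h | h
    · exact hper (n' - n) (by omega) a _
        (F.iterate_sub_eq_add_int_of_iterate_add_int_eq hFi h.le heq.symm)
    · exact hper (n - n') (by omega) a _
        (F.iterate_sub_eq_add_int_of_iterate_add_int_eq hFi h.le heq)
  have hlen : Tendsto (fun n => F^[n] b - F^[n] a) atTop (𝓝 0) := by
    refine (tendsto_sub_atTop_zero_of_pairwise_disjoint_Ioo (c := 0) (d := 2) (fun n => ?_)
      (fun n => ?_) hdisj).congr fun n => by ring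
    · linarith [(hFmono.iterate n) (hxab.1.trans hxab.2)]
    · have h₀ : 0 ≤ F^[n] a + s n := by
        simp only [s]; push_cast; linarith [Int.floor_le (F^[n] a)]
      have h₁ : F^[n] a + s n < 1 := by
        simp only [s]; push_cast; linarith [Int.lt_floor_add_one (F^[n] a)]
      have h₂ := (hgaps n).le_add_one hAper
      exact Ioo_subset_Icc_self.trans (Icc_subset_Icc h₀ (by linarith))
  obtain ⟨n, hn⟩ := (hlen.eventually (gt_mem_nhds hδ)).exists
  have hxn : F^[n] x ∈ Ioo (F^[n] a) (F^[n] b) :=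
    ⟨hFmono.iterate n hxab.1, hFmono.iterate n hxab.2⟩
  refine ⟨n, F^[n] a, (F.iterate_mem_iff hFA n a).mpr hgap.1, ?_⟩
  rw [Real.dist_eq, abs_of_pos (sub_pos.mpr hxn.1)]
  linarith [hxn.2]

end CircleDeg1Lift

theorem AddCircle.periodicPts_nonempty_of_invariant_disjoint (g : 𝕋 ≃ₜ 𝕋) {A B : Set 𝕋}
    (hA : IsClosed A) (hB : IsClosed B) (hAB : Disjoint A B) (hA₀ : A.Nonempty)
    (hB₀ : B.Nonempty) (hgA : g ⁻¹' A = A) (hgB : MapsTo g B B) : (periodicPts g).Nonempty := by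
  obtain ⟨p, hp⟩ | ⟨F, hF, hFi, hlift⟩ := exists_isFixedPt_or_circleDeg1Lift g
  · exact ⟨p, mk_mem_periodicPts one_pos (hp.isPeriodicPt 1)⟩
  by_contra hnone
  have hliftn (n : ℕ) (x : ℝ) : (F^[n] x : 𝕋) = g^[n] x := by
    induction n generalizing x with
    | zero => rfl
    | succ n ih => rw [iterate_succ_apply', iterate_succ_apply', hlift, ih]
  have hper (n : ℕ) (hn : 0 < n) (y : ℝ) (m : ℤ) : F^[n] y ≠ y + m := fun h =>
    hnone ⟨y, mk_mem_periodicPts hn (by rw [IsPeriodicPt, IsFixedPt, ← hliftn, h]; simp)⟩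
  obtain ⟨b, hb⟩ := hB₀
  obtain ⟨x, rfl⟩ := QuotientAddGroup.mk_surjective b
  obtain ⟨r, hr, hsep⟩ := Metric.exists_pos_forall_lt_edist hB.isCompact hA hAB.symm
  obtain ⟨n, a, ha, hn⟩ := F.exists_dist_iterate_lt_of_invariant (A := (↑) ⁻¹' A) hF hFi hper
    (hA.preimage continuous_quotient_mk') (fun y m => by simp)
    (fun y => by simp [hlift, ← mem_preimage (f := g), hgA])
    (hA₀.preimage QuotientAddGroup.mk_surjective) (fun hx => hAB.ne_of_mem hx hb rfl) hr
  have := hsep _ (hgB.iterate n hb) _ ha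
  rw [← hliftn, edist_nndist, ENNReal.coe_lt_coe, ← NNReal.coe_lt_coe, coe_nndist] at this
  exact (this.trans_le (AddCircle.dist_coe_le _ _)).not_gt hn

theorem stmt_1_general {Z : Type*} [MetricSpace Z] [CompactSpace Z]
    (γ : Z ≃ₜ Z) (γp γm : Z) (hne : γp ≠ γm)
    (hfix : {z : Z | γ z = z} = {γp, γm})
    (g : AddCircle (1 : ℝ) ≃ₜ AddCircle (1 : ℝ))
    (f : AddCircle (1 : ℝ) → Z) (hf : Continuous f) (hsurj : Function.Surjective f)
    (hsemi : ∀ p : AddCircle (1 : ℝ), f (g p) = γ (f p)) :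
    ∃ k : ℕ, 1 ≤ k ∧ ∃ p : AddCircle (1 : ℝ), (⇑g)^[k] p = p := by
  have hγp : γ γp = γp := hfix.ge (mem_insert γp {γm})
  have hγm : γ γm = γm := hfix.ge (mem_insert_of_mem γp rfl)
  obtain ⟨p, k, hk, hp⟩ := AddCircle.periodicPts_nonempty_of_invariant_disjoint g
    (isClosed_singleton.preimage hf) (isClosed_singleton.preimage hf)
    ((disjoint_singleton.mpr hne).preimage f)
    (hsurj.nonempty_preimage.mpr (singleton_nonempty _))
    (hsurj.nonempty_preimage.mpr (singleton_nonempty _))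
    (ext fun p => show f (g p) = γp ↔ f p = γp by rw [hsemi, γ.injective.eq_iff' hγp])
    (fun p (hp : f p = γm) => show f (g p) = γm by rw [hsemi, hp, hγm])
  exact ⟨k, hk, p, hp⟩

/-- If a circle homeomorphism `g` is semiconjugate, via a continuous
surjection `f`, to a homeomorphism `γ` of a compact metric space with
north-south dynamics, then some positive power of `g` has a fixed point. -/
theorem stmt_1 {Z : Type*} [MetricSpace Z] [CompactSpace Z]
    (γ : Z ≃ₜ Z) (γp γm : Z) (hne : γp ≠ γm)
    (hfix : {z : Z | γ z = z} = {γp, γm})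
    (hattr : ∀ z : Z, z ≠ γm →
      Filter.Tendsto (fun n : ℕ => (⇑γ)^[n] z) Filter.atTop (nhds γp))
    (hrep : ∀ z : Z, z ≠ γp →
      Filter.Tendsto (fun n : ℕ => (⇑γ.symm)^[n] z) Filter.atTop (nhds γm))
    (g : AddCircle (1 : ℝ) ≃ₜ AddCircle (1 : ℝ))
    (f : AddCircle (1 : ℝ) → Z) (hf : Continuous f) (hsurj : Function.Surjective f)
    (hsemi : ∀ p : AddCircle (1 : ℝ), f (g p) = γ (f p)) :
    ∃ k : ℕ, 1 ≤ k ∧ ∃ p : AddCircle (1 : ℝ), (⇑g)^[k] p = p :=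
  stmt_1_general γ γp γm hne hfix g f hf hsurj hsemi
end

section
/- Let γ be a homeomorphism of a compact metric space Z with north-south dynamics with fixed points γ⁺ ≠ γ⁻, let g be a homeomorphism of S¹ and f : S¹ → Z continuous with f ∘ g = γ ∘ f. Let B = f⁻¹({γ⁺, γ⁻}), assumed nonempty and not all of S¹, and let J be a connected component of S¹ \ B whose two endpoints a, b satisfy f(a) ≠ f(b). Then J is periodic under g, i.e. gᵏ(J) = J for some k ≥ 1. -/
open Set MeasureTheory Filter Topology

/-- Every point of the circle has a representative in `(0, 1]`. -/
lemma stmt2_exists_coe_Ioc (z : AddCircle (1:ℝ)) :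
    ∃ b ∈ Set.Ioc (0:ℝ) (0+1), (b : AddCircle (1:ℝ)) = z := by
  let w := QuotientAddGroup.equivIocMod (zero_lt_one (α := ℝ)) 0 z
  exact ⟨w.1, w.2, (QuotientAddGroup.equivIocMod (zero_lt_one (α := ℝ)) 0).symm_apply_apply z⟩

/-- The projection `ℝ → ℝ/ℤ` is `1`-Lipschitz. -/
lemma stmt2_lipschitz_mk : LipschitzWith 1 ((↑) : ℝ → AddCircle (1:ℝ)) := by
  refine LipschitzWith.of_dist_le_mul fun x y => ?_
  have h : dist ((x : AddCircle (1:ℝ))) (y : AddCircle (1:ℝ)) ≤ dist x y := by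
    rw [dist_eq_norm, dist_eq_norm]
    exact QuotientAddGroup.norm_mk_le_norm (m := x - y)
  simpa using h

instance : LocallyConnectedSpace (AddCircle (1:ℝ)) := by
  apply locallyConnectedSpace_of_connected_bases
    (fun z r => ((↑) : ℝ → AddCircle (1:ℝ)) '' Metric.ball (Quotient.out z) r)
    (fun _ r => 0 < r)
  · intro z
    have hz : ((Quotient.out z : ℝ) : AddCircle (1:ℝ)) = z := Quotient.out_eq z
    have hmap : 𝓝 z = Filter.map ((↑) : ℝ → AddCircle (1:ℝ)) (𝓝 (Quotient.out z)) := by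
      rw [(QuotientAddGroup.isOpenQuotientMap_mk).map_nhds_eq, hz]
    rw [hmap]
    exact Metric.nhds_basis_ball.map _
  · intro z r _
    exact ((convex_ball _ r).isPreconnected).image _
      (QuotientAddGroup.isOpenQuotientMap_mk).continuous.continuousOn

/-- A preconnected subset of the circle has measure at least the distance between
any two of its points. -/
lemma stmt2_volume_lower {C : Set (AddCircle (1:ℝ))} (hC : IsPreconnected C)
    (hm : MeasurableSet C) {u v : AddCircle (1:ℝ)} (hu : u ∈ C) (hv : v ∈ C) :
    ENNReal.ofReal (dist v u) ≤ volume C := by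
  haveI : Fact ((0:ℝ) < 1) := ⟨zero_lt_one⟩
  set S : Set ℝ := (((↑) : ℝ → AddCircle (1:ℝ)) ⁻¹' C) ∩ Set.Ioc 0 (0+1) with hSdef
  have hvol : volume C = volume S := AddCircle.add_projection_respects_measure 1 0 hm
  set H : ℝ → ℝ := (fun z => dist z u) ∘ ((↑) : ℝ → AddCircle (1:ℝ)) with hHdef
  have hH : LipschitzWith 1 H := by
    simpa using (LipschitzWith.dist_left u).comp stmt2_lipschitz_mk
  have hsub : Set.Icc (0:ℝ) (dist v u) ⊆ H '' S := by
    intro t ht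
    have hIVT := hC.intermediate_value hu hv
      (f := fun z => dist z u) (Continuous.continuousOn (by fun_prop))
    simp only [dist_self] at hIVT
    obtain ⟨z, hzC, hzt⟩ := hIVT ht
    obtain ⟨b, hb, hbz⟩ := stmt2_exists_coe_Ioc z
    exact ⟨b, ⟨by simp [hbz, hzC], hb⟩, by simp [hHdef, hbz, hzt]⟩
  calc ENNReal.ofReal (dist v u) = volume (Set.Icc (0:ℝ) (dist v u)) := by
        rw [Real.volume_Icc, sub_zero]
    _ ≤ volume (H '' S) := measure_mono hsub
    _ = μH[1] (H '' S) := by rw [MeasureTheory.hausdorffMeasure_real]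
    _ ≤ μH[1] S := by simpa using hH.hausdorffMeasure_image_le zero_le_one S
    _ = volume S := by rw [MeasureTheory.hausdorffMeasure_real]
    _ = volume C := hvol.symm

/-- Under a semiconjugacy from a circle homeomorphism `g` to a
north-south dynamics homeomorphism `γ`, a complementary interval `J` of
`B = f⁻¹({γ⁺, γ⁻})` whose endpoints have distinct images under `f` is periodic
under `g`. -/
theorem stmt_2 {Z : Type*} [MetricSpace Z] [CompactSpace Z]
    (γ : Z ≃ₜ Z) (γp γm : Z) (hne : γp ≠ γm)
    (hfix : {z : Z | γ z = z} = {γp, γm})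
    (hattr : ∀ z : Z, z ≠ γm →
      Filter.Tendsto (fun n : ℕ => (⇑γ)^[n] z) Filter.atTop (nhds γp))
    (hrep : ∀ z : Z, z ≠ γp →
      Filter.Tendsto (fun n : ℕ => (⇑γ.symm)^[n] z) Filter.atTop (nhds γm))
    (g : AddCircle (1 : ℝ) ≃ₜ AddCircle (1 : ℝ))
    (f : AddCircle (1 : ℝ) → Z) (hf : Continuous f)
    (hsemi : ∀ p : AddCircle (1 : ℝ), f (g p) = γ (f p))
    (B : Set (AddCircle (1 : ℝ))) (hB : B = f ⁻¹' {γp, γm})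
    (hBne : B.Nonempty) (hBproper : B ≠ Set.univ)
    (J : Set (AddCircle (1 : ℝ))) (x : AddCircle (1 : ℝ)) (hx : x ∈ Bᶜ)
    (hJ : J = connectedComponentIn Bᶜ x)
    (a b : AddCircle (1 : ℝ)) (hab : a ≠ b)
    (hends : closure J \ J = {a, b})
    (hfab : f a ≠ f b) :
    ∃ k : ℕ, 1 ≤ k ∧ (⇑g)^[k] '' J = J := by
  haveI : Fact ((0:ℝ) < 1) := ⟨zero_lt_one⟩
  by_contra hcon
  push_neg at hcon
  -- basic facts
  have hBclosed : IsClosed B := by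
    rw [hB]
    exact IsClosed.preimage hf ((Set.finite_singleton γm).insert γp).isClosed
  have hBopen : IsOpen Bᶜ := hBclosed.isOpen_compl
  have hγp : γ γp = γp := by
    have h : γp ∈ {z : Z | γ z = z} := by rw [hfix]; exact mem_insert _ _
    exact h
  have hγm : γ γm = γm := by
    have h : γm ∈ {z : Z | γ z = z} := by rw [hfix]; exact mem_insert_of_mem _ rfl
    exact h
  -- g preserves B
  have hmemB : ∀ p, g p ∈ B ↔ p ∈ B := by
    intro p
    simp only [hB, mem_preimage, hsemi, mem_insert_iff, mem_singleton_iff]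
    constructor
    · rintro (h | h)
      · exact Or.inl (γ.injective (by rw [h, hγp]))
      · exact Or.inr (γ.injective (by rw [h, hγm]))
    · rintro (h | h)
      · exact Or.inl (by rw [h, hγp])
      · exact Or.inr (by rw [h, hγm])
  have hgBc : g '' Bᶜ = Bᶜ := by
    ext y
    constructor
    · rintro ⟨p, hp, rfl⟩
      exact fun h => hp ((hmemB p).mp h)
    · intro hy
      refine ⟨g.symm y, fun h => hy ?_, g.apply_symm_apply y⟩
      have := (hmemB (g.symm y)).mpr h
      rwa [g.apply_symm_apply] at this
  -- iterates of x stay in Bᶜ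
  have hxn : ∀ n : ℕ, (⇑g)^[n] x ∈ Bᶜ := by
    intro n
    induction n with
    | zero => exact hx
    | succ n ih =>
      rw [Function.iterate_succ_apply']
      exact fun h => ih ((hmemB _).mp h)
  -- the iterated sets are components
  have hCn : ∀ n : ℕ, (⇑g)^[n] '' J = connectedComponentIn Bᶜ ((⇑g)^[n] x) := by
    intro n
    induction n with
    | zero => simpa using hJ
    | succ n ih =>
      rw [Function.iterate_succ_apply', Function.iterate_succ']
      rw [show ((⇑g) ∘ (⇑g)^[n]) '' J = g '' ((⇑g)^[n] '' J) from Set.image_comp _ _ _, ih,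
        g.image_connectedComponentIn (hxn n), hgBc]
  -- basic properties of J
  have hxJ : x ∈ J := hJ ▸ mem_connectedComponentIn hx
  have hJopen : IsOpen J := hJ ▸ hBopen.connectedComponentIn
  have hJpre : IsPreconnected J := hJ ▸ isPreconnected_connectedComponentIn
  have hJsub : J ⊆ Bᶜ := hJ ▸ connectedComponentIn_subset _ _
  -- the iterated sets are pairwise distinct, hence disjoint
  have hdistinct : ∀ m n : ℕ, m < n → (⇑g)^[m] '' J ≠ (⇑g)^[n] '' J := by
    intro m n hmn heq
    apply hcon (n - m) (by omega)
    have hinj : Function.Injective ((⇑g)^[m]) := Function.Injective.iterate g.injective m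
    have h1 : (⇑g)^[m] '' ((⇑g)^[n-m] '' J) = (⇑g)^[m] '' J := by
      rw [← Set.image_comp, ← Function.iterate_add, show m + (n - m) = n by omega]
      exact heq.symm
    exact Set.image_injective.mpr hinj h1
  have hdisj : Pairwise (Function.onFun Disjoint (fun n : ℕ => (⇑g)^[n] '' J)) := by
    intro m n hmn
    rw [Function.onFun, Set.disjoint_left]
    intro z hzm hzn
    have e1 : connectedComponentIn Bᶜ ((⇑g)^[m] x) = connectedComponentIn Bᶜ z :=
      connectedComponentIn_eq (hCn m ▸ hzm)
    have e2 : connectedComponentIn Bᶜ ((⇑g)^[n] x) = connectedComponentIn Bᶜ z :=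
      connectedComponentIn_eq (hCn n ▸ hzn)
    have heq : (⇑g)^[m] '' J = (⇑g)^[n] '' J := by rw [hCn m, hCn n, e1, e2]
    rcases hmn.lt_or_gt with h | h
    · exact hdistinct m n h heq
    · exact hdistinct n m h heq.symm
  -- the endpoints lie in B
  have hbd : closure J \ J ⊆ B := by
    intro y hy
    by_contra hyB
    have hconn : IsPreconnected (insert y J) :=
      hJpre.subset_closure (subset_insert _ _) (insert_subset hy.1 subset_closure)
    have hsub2 : insert y J ⊆ connectedComponentIn Bᶜ x :=
      hconn.subset_connectedComponentIn (mem_insert_of_mem _ hxJ)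
        (insert_subset hyB hJsub)
    exact hy.2 (hJ ▸ hsub2 (mem_insert _ _))
  have haD : a ∈ closure J \ J := by rw [hends]; exact mem_insert _ _
  have hbD : b ∈ closure J \ J := by rw [hends]; exact mem_insert_of_mem _ rfl
  have haB : a ∈ B := hbd haD
  have hbB : b ∈ B := hbd hbD
  -- f a, f b are fixed by γ
  have hfaFix : γ (f a) = f a := by
    have : f a ∈ ({γp, γm} : Set Z) := by rw [hB] at haB; exact haB
    rcases this with h | h
    · rw [h, hγp]
    · rw [mem_singleton_iff] at h; rw [h, hγm]
  have hfbFix : γ (f b) = f b := by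
    have : f b ∈ ({γp, γm} : Set Z) := by rw [hB] at hbB; exact hbB
    rcases this with h | h
    · rw [h, hγp]
    · rw [mem_singleton_iff] at h; rw [h, hγm]
  -- iterated semiconjugacy
  have hit : ∀ (n : ℕ) (p : AddCircle (1:ℝ)), f ((⇑g)^[n] p) = (⇑γ)^[n] (f p) := by
    intro n
    induction n with
    | zero => simp
    | succ n ih =>
      intro p
      rw [Function.iterate_succ_apply', hsemi, ih, Function.iterate_succ_apply']
  have hfan : ∀ n : ℕ, f ((⇑g)^[n] a) = f a := fun n => by
    rw [hit n a, Function.iterate_fixed hfaFix n]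
  have hfbn : ∀ n : ℕ, f ((⇑g)^[n] b) = f b := fun n => by
    rw [hit n b, Function.iterate_fixed hfbFix n]
  -- uniform continuity
  have hD : 0 < dist (f a) (f b) := dist_pos.mpr hfab
  obtain ⟨δ, hδ, hδimp⟩ := Metric.uniformContinuous_iff.mp
    (CompactSpace.uniformContinuous_of_continuous hf) (dist (f a) (f b)) hD
  -- openness and measurability of the iterated sets
  have hopenC : ∀ n : ℕ, IsOpen ((⇑g)^[n] '' J) := fun n => by
    rw [hCn n]; exact hBopen.connectedComponentIn
  -- lower bound on the volume of each iterated set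
  have key : ∀ n : ℕ, ENNReal.ofReal (δ/2) ≤ volume ((⇑g)^[n] '' J) := by
    intro n
    have hcontn : Continuous ((⇑g)^[n]) := by
      induction n with
      | zero => exact continuous_id
      | succ n ih => rw [Function.iterate_succ']; exact g.continuous.comp ih
    have han : (⇑g)^[n] a ∈ closure ((⇑g)^[n] '' J) :=
      (image_closure_subset_closure_image hcontn) (mem_image_of_mem _ (mem_of_mem_diff haD))
    have hbn : (⇑g)^[n] b ∈ closure ((⇑g)^[n] '' J) :=
      (image_closure_subset_closure_image hcontn) (mem_image_of_mem _ (mem_of_mem_diff hbD))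
    have hdab : δ ≤ dist ((⇑g)^[n] a) ((⇑g)^[n] b) := by
      by_contra h
      push_neg at h
      have h2 := hδimp h
      rw [hfan n, hfbn n] at h2
      exact lt_irrefl _ h2
    obtain ⟨u, huC, hu⟩ := Metric.mem_closure_iff.mp han (δ/4) (by positivity)
    obtain ⟨v, hvC, hv⟩ := Metric.mem_closure_iff.mp hbn (δ/4) (by positivity)
    have huv : δ/2 ≤ dist v u := by
      have tri : dist ((⇑g)^[n] a) ((⇑g)^[n] b) ≤
          dist ((⇑g)^[n] a) u + dist u v + dist v ((⇑g)^[n] b) := dist_triangle4 _ _ _ _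
      have h1 : dist v ((⇑g)^[n] b) = dist ((⇑g)^[n] b) v := dist_comm _ _
      have h2 : dist v u = dist u v := dist_comm _ _
      linarith
    have hpre : IsPreconnected ((⇑g)^[n] '' J) := by
      rw [hCn n]; exact isPreconnected_connectedComponentIn
    calc ENNReal.ofReal (δ/2) ≤ ENNReal.ofReal (dist v u) := ENNReal.ofReal_le_ofReal huv
      _ ≤ volume ((⇑g)^[n] '' J) :=
          stmt2_volume_lower hpre (hopenC n).measurableSet huC hvC
  -- contradiction via finiteness of the total measure
  have htop : (⊤ : ENNReal) ≤ volume (univ : Set (AddCircle (1:ℝ))) := by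
    calc (⊤ : ENNReal) = ∑' _ : ℕ, ENNReal.ofReal (δ/2) :=
          (ENNReal.tsum_const_eq_top_of_ne_zero
            (ne_of_gt (ENNReal.ofReal_pos.mpr (by positivity)))).symm
      _ ≤ ∑' n : ℕ, volume ((⇑g)^[n] '' J) := ENNReal.tsum_le_tsum key
      _ = volume (⋃ n : ℕ, (⇑g)^[n] '' J) :=
          (measure_iUnion hdisj (fun n => (hopenC n).measurableSet)).symm
      _ ≤ volume (univ : Set (AddCircle (1:ℝ))) := measure_mono (subset_univ _)
  rw [AddCircle.measure_univ] at htop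
  simp at htop
end

section
/- Let μ be a nonatomic Borel measure with full support on S¹ (every nonempty open set has positive measure and points have measure zero). For an arc (a,b) ⊂ S¹ define ζ_{ab}(s) = μ([a,s]) for s ∈ (a,b). Then each ζ_{ab} is a homeomorphism onto its image, and for two overlapping arcs the transition map ζ_{a'b'} ∘ ζ_{ab}⁻¹ is, on each connected component of its domain, a translation of an interval of ℝ. Hence these charts define a C^∞ atlas on S¹. -/
/-!
On an arc `[a, a + p)` the covering map `ℝ → ℝ/pℤ` is injective, so two consecutive closed
subarcs meet in a single point, which carries no mass; hence `μ([a,t]) - μ([a,s]) = μ([s,t])`.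
This increment is positive by full support, small for `t` near `s` because `μ` has no atoms,
and depends only on the image of `[s,t]` in the circle, so it is unchanged when `s` and `t`
are shifted by a period.
-/

open MeasureTheory Set Filter Topology

namespace AddCircle

variable {p : ℝ} (μ : Measure (AddCircle p))

lemma image_coe_Icc_add_zsmul (s t : ℝ) (n : ℤ) :
    ((↑) : ℝ → AddCircle p) '' Icc (s + n • p) (t + n • p) = (↑) '' Icc s t := by
  rw [← image_add_const_Icc, image_image]
  exact image_congr fun x _ => by simp

lemma isClosed_image_coe_Icc (s t : ℝ) : IsClosed (((↑) : ℝ → AddCircle p) '' Icc s t) :=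
  (isCompact_Icc.image (AddCircle.continuous_mk' p)).isClosed

lemma measure_image_coe_Icc_pos [μ.IsOpenPosMeasure] {s t : ℝ} (hst : s < t) :
    0 < μ (((↑) : ℝ → AddCircle p) '' Icc s t) :=
  ((QuotientAddGroup.isOpenMap_coe _ isOpen_Ioo).measure_pos μ
    ((nonempty_Ioo.mpr hst).image _)).trans_le (measure_mono (image_mono Ioo_subset_Icc_self))

noncomputable def arcChart (a s : ℝ) : ℝ := (μ (((↑) : ℝ → AddCircle p) '' Icc a s)).toReal

variable {μ} in
lemma arcChart_mono [IsFiniteMeasure μ] {s t s' t' : ℝ} (hs : s' ≤ s) (ht : t ≤ t') :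
    arcChart μ s t ≤ arcChart μ s' t' :=
  ENNReal.toReal_mono (measure_ne_top μ _) (measure_mono (image_mono (Icc_subset_Icc hs ht)))

lemma arcChart_pos [IsFiniteMeasure μ] [μ.IsOpenPosMeasure] {s t : ℝ} (hst : s < t) :
    0 < arcChart μ s t :=
  ENNReal.toReal_pos (measure_image_coe_Icc_pos μ hst).ne' (measure_ne_top μ _)

lemma arcChart_add_zsmul (s t : ℝ) (n : ℤ) :
    arcChart μ (s + n • p) (t + n • p) = arcChart μ s t := by
  rw [arcChart, image_coe_Icc_add_zsmul, arcChart]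

variable [Fact (0 < p)]

lemma injOn_coe_Ico (a : ℝ) : InjOn ((↑) : ℝ → AddCircle p) (Ico a (a + p)) :=
  fun _ hx _ hy h => (coe_eq_coe_iff_of_mem_Ico hx hy).mp h

lemma measure_image_coe_Icc_add [NullSingletonClass μ] {a s t : ℝ}
    (has : a ≤ s) (hst : s ≤ t) (hta : t - a < p) :
    μ ((↑) '' Icc a s) + μ ((↑) '' Icc s t) = μ (((↑) : ℝ → AddCircle p) '' Icc a t) := by
  have hinj : InjOn ((↑) : ℝ → AddCircle p) (Icc a s ∪ Icc s t) := by
    refine (injOn_coe_Ico a).mono ?_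
    rw [Icc_union_Icc_eq_Icc has hst]
    exact Icc_subset_Ico_right (by linarith)
  have hinter : ((↑) : ℝ → AddCircle p) '' Icc a s ∩ (↑) '' Icc s t = {(s : AddCircle p)} := by
    rw [← hinj.image_inter subset_union_left subset_union_right, Icc_inter_Icc,
      max_eq_right has, min_eq_left hst, Icc_self, image_singleton]
  rw [← measure_union_add_inter _ (isClosed_image_coe_Icc s t).measurableSet, hinter,
    measure_singleton, add_zero, ← image_union, Icc_union_Icc_eq_Icc has hst]

lemma tendsto_measure_image_coe_Icc [IsFiniteMeasure μ] [NullSingletonClass μ] (s : ℝ) :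
    Tendsto (fun δ => μ (((↑) : ℝ → AddCircle p) '' Icc (s - δ) (s + δ))) (𝓝 0) (𝓝 0) := by
  have hball : Tendsto (fun δ => μ (Metric.cthickening δ {(s : AddCircle p)})) (𝓝 0) (𝓝 0) := by
    simpa using tendsto_measure_cthickening_of_isCompact (μ := μ) isCompact_singleton
  refine tendsto_of_tendsto_of_tendsto_of_le_of_le tendsto_const_nhds hball (fun _ => zero_le)
    fun δ => measure_mono ?_
  rintro _ ⟨x, hx, rfl⟩
  refine Metric.mem_cthickening_of_dist_le _ _ _ _ (mem_singleton _) ?_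
  calc dist (x : AddCircle p) s = ‖((x - s : ℝ) : AddCircle p)‖ := by rw [dist_eq_norm, coe_sub]
    _ ≤ ‖x - s‖ := QuotientAddGroup.norm_mk_le_norm
    _ ≤ δ := by rw [Real.norm_eq_abs, abs_le]; constructor <;> linarith [hx.1, hx.2]

variable [IsFiniteMeasure μ] [NullSingletonClass μ]

lemma arcChart_sub {a s t : ℝ} (has : a ≤ s) (hst : s ≤ t) (hta : t - a < p) :
    arcChart μ a t - arcChart μ a s = arcChart μ s t := by
  rw [sub_eq_iff_eq_add', arcChart, arcChart, arcChart, ← ENNReal.toReal_add (measure_ne_top μ _)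
    (measure_ne_top μ _), measure_image_coe_Icc_add μ has hst hta]

lemma strictMonoOn_arcChart [μ.IsOpenPosMeasure] (a : ℝ) :
    StrictMonoOn (arcChart μ a) (Ico a (a + p)) := fun s hs t ht hst => by
  linarith [arcChart_sub μ hs.1 hst.le (by linarith [ht.2]), arcChart_pos μ hst]

lemma abs_arcChart_sub_le [μ.IsOpenPosMeasure] {a s t : ℝ} (hs : s ∈ Ico a (a + p))
    (ht : t ∈ Ico a (a + p)) :
    |arcChart μ a t - arcChart μ a s| ≤ arcChart μ (s - |t - s|) (s + |t - s|) := by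
  have hmono := (strictMonoOn_arcChart μ a).monotoneOn
  rcases le_total s t with h | h
  · rw [abs_of_nonneg (sub_nonneg.2 (hmono hs ht h)), arcChart_sub μ hs.1 h (by linarith [ht.2])]
    exact arcChart_mono (by linarith [abs_nonneg (t - s)]) (by linarith [le_abs_self (t - s)])
  · rw [abs_sub_comm, abs_of_nonneg (sub_nonneg.2 (hmono ht hs h)),
      arcChart_sub μ ht.1 h (by linarith [hs.2])]
    exact arcChart_mono (by linarith [neg_abs_le (t - s)]) (by linarith [abs_nonneg (t - s)])

lemma continuousOn_arcChart [μ.IsOpenPosMeasure] (a : ℝ) :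
    ContinuousOn (arcChart μ a) (Ico a (a + p)) := by
  intro s hs
  have hdist : Tendsto (fun t => |t - s|) (𝓝[Ico a (a + p)] s) (𝓝 0) := by
    simpa using ((continuous_sub_right s).abs.tendsto s).mono_left nhdsWithin_le_nhds
  have hbound : Tendsto (fun t => arcChart μ (s - |t - s|) (s + |t - s|))
      (𝓝[Ico a (a + p)] s) (𝓝 0) := by
    simpa only [arcChart, ENNReal.toReal_zero, Function.comp_def] using
      (ENNReal.tendsto_toReal ENNReal.zero_ne_top).comp
        ((tendsto_measure_image_coe_Icc μ s).comp hdist)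
  rw [ContinuousWithinAt, tendsto_iff_norm_sub_tendsto_zero]
  exact squeeze_zero' (Eventually.of_forall fun _ => norm_nonneg _)
    (eventually_nhdsWithin_of_forall fun t ht => abs_arcChart_sub_le μ hs ht) hbound

end AddCircle

open AddCircle in
/-- A nonatomic, fully supported finite Borel measure `μ` on the
circle defines charts `ζ_{ab}(s) = μ([a,s])` on arcs which are homeomorphisms
onto their images (strictly monotone and continuous), and whose transition maps
are translations of intervals of `ℝ`; hence they form a smooth atlas. -/
theorem stmt_4 (μ : Measure (AddCircle (1 : ℝ))) [IsFiniteMeasure μ]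
    (hna : ∀ x : AddCircle (1 : ℝ), μ {x} = 0)
    (hfull : ∀ U : Set (AddCircle (1 : ℝ)), IsOpen U → U.Nonempty → 0 < μ U)
    (ζ : ℝ → ℝ → ℝ)
    (hζ : ∀ a s : ℝ, ζ a s =
      (μ ((QuotientAddGroup.mk : ℝ → AddCircle (1 : ℝ)) '' Icc a s)).toReal) :
    (∀ a b : ℝ, a < b → b - a < 1 →
      StrictMonoOn (ζ a) (Ioo a b) ∧ ContinuousOn (ζ a) (Ioo a b)) ∧
    (∀ (a b a' b' : ℝ), a < b → b - a < 1 → a' < b' → b' - a' < 1 →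
      ∀ (n : ℤ) (s t : ℝ), s ∈ Ioo a b → t ∈ Ioo a b → s ≤ t →
        s + n ∈ Ioo a' b' → t + n ∈ Ioo a' b' →
        ζ a' (t + n) - ζ a' (s + n) = ζ a t - ζ a s) := by
  have : NullSingletonClass μ := ⟨hna⟩
  have : μ.IsOpenPosMeasure := ⟨fun U hU hne => (hfull U hU hne).ne'⟩
  obtain rfl : ζ = arcChart μ := funext₂ hζ
  have harc {a b : ℝ} (hba : b - a < 1) : Ioo a b ⊆ Ico a (a + 1) :=
    Ioo_subset_Ico_self.trans (Ico_subset_Ico_right (by linarith))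
  refine ⟨fun a b _ hba => ⟨(strictMonoOn_arcChart μ a).mono (harc hba),
    (continuousOn_arcChart μ a).mono (harc hba)⟩, ?_⟩
  intro a b a' b' _ _ _ _ n s t hs ht hst hsn htn
  rw [arcChart_sub μ hsn.1.le (by linarith) (by linarith [htn.2]),
    arcChart_sub μ hs.1.le hst (by linarith [ht.2]), ← zsmul_one, arcChart_add_zsmul]
end

section
/- Let V be a finite-dimensional normed vector space with a splitting V = U ⊕ E, and let L : V → V be a linear map with L(E) = E. Write, for u ∈ U, L(u) = u' + w' with u' ∈ U, w' ∈ E. Suppose there exist constants c₃, c₄ > 0 with ‖u'‖ > 2c₃‖u‖, ‖w'‖ ≤ c₄‖u'‖ for all u ∈ U, and ‖L(w)‖ ≤ c₃‖w‖ for all w ∈ E. Then for any β > 2c₄, the cone C_β = { u + w : u ∈ U, w ∈ E, ‖w‖ < β‖u‖ } satisfies L(closure of C_β \ {0}) ⊂ C_β; that is, the cone is strictly invariant under L. -/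
/-- Strict cone invariance. If `V = U ⊕ E`, `L` preserves `E`,
expands the `U`-component (`‖u'‖ > 2c₃‖u‖` with `‖w'‖ ≤ c₄‖u'‖`) and is bounded
by `c₃` on `E`, then for any `β > 2c₄` the cone
`C_β = {u + w : ‖w‖ < β‖u‖}` satisfies `L(closure C_β \ {0}) ⊆ C_β`. -/
theorem stmt_12 {V : Type*} [NormedAddCommGroup V] [NormedSpace ℝ V]
    [FiniteDimensional ℝ V]
    (U E : Submodule ℝ V) (hcompl : IsCompl U E)
    (L : V →ₗ[ℝ] V) (hLE : ∀ w ∈ E, L w ∈ E)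
    (c₃ c₄ : ℝ) (hc₃ : 0 < c₃) (hc₄ : 0 < c₄)
    (h1 : ∀ u ∈ U, u ≠ 0 →
      2 * c₃ * ‖u‖ < ‖(Submodule.linearProjOfIsCompl U E hcompl (L u) : V)‖)
    (h2 : ∀ u ∈ U,
      ‖L u - (Submodule.linearProjOfIsCompl U E hcompl (L u) : V)‖ ≤
        c₄ * ‖(Submodule.linearProjOfIsCompl U E hcompl (L u) : V)‖)
    (h3 : ∀ w ∈ E, ‖L w‖ ≤ c₃ * ‖w‖)
    (β : ℝ) (hβ : 2 * c₄ < β)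
    (C : Set V)
    (hC : C = {v | ∃ u ∈ U, ∃ w ∈ E, v = u + w ∧ ‖w‖ < β * ‖u‖}) :
    ∀ v ∈ closure C, v ≠ 0 → L v ∈ C := by
  have hβ0 : 0 < β := lt_trans (by positivity) hβ
  set pr : V →ₗ[ℝ] V := U.subtype.comp (Submodule.linearProjOfIsCompl U E hcompl) with hpr
  have hpr_left : ∀ u ∈ U, ∀ w ∈ E, pr (u + w) = u := by
    intro u hu w hw
    have h1' : (Submodule.linearProjOfIsCompl U E hcompl) u = ⟨u, hu⟩ :=
      Submodule.linearProjOfIsCompl_apply_left hcompl ⟨u, hu⟩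
    have h2' : (Submodule.linearProjOfIsCompl U E hcompl) w = 0 :=
      Submodule.projectionOnto_apply_of_mem_right hcompl hw
    simp [hpr, h1', h2']
  have hprU : ∀ v, pr v ∈ U := fun v => (Submodule.linearProjOfIsCompl U E hcompl v).2
  have hprE : ∀ v, v - pr v ∈ E := by
    intro v
    have := Submodule.projection_add_projection_eq_self hcompl v
    have : v - pr v = (E.linearProjOfIsCompl U hcompl.symm v : V) := by
      nth_rewrite 1 [← this]; exact add_sub_cancel_left _ _
    rw [this]; exact (E.linearProjOfIsCompl U hcompl.symm v).2
  -- closure bound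
  have hCsub : C ⊆ {v | ‖v - pr v‖ ≤ β * ‖pr v‖} := by
    intro v hv
    rw [hC] at hv
    obtain ⟨u, hu, w, hw, rfl, hlt⟩ := hv
    have h := hpr_left u hu w hw
    show ‖(u + w) - pr (u + w)‖ ≤ β * ‖pr (u + w)‖
    rw [h]
    simpa using le_of_lt hlt
  have hprc : Continuous pr := pr.continuous_of_finiteDimensional
  have hclosed : IsClosed {v : V | ‖v - pr v‖ ≤ β * ‖pr v‖} :=
    isClosed_le (by fun_prop) (by fun_prop)
  have hcl : closure C ⊆ {v | ‖v - pr v‖ ≤ β * ‖pr v‖} :=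
    closure_minimal hCsub hclosed
  intro v hv hv0
  have hvle : ‖v - pr v‖ ≤ β * ‖pr v‖ := hcl hv
  set u : V := pr v with hu
  set w : V := v - pr v with hw
  have huU : u ∈ U := hprU v
  have hwE : w ∈ E := hprE v
  have hu0 : u ≠ 0 := by
    intro h
    apply hv0
    have : ‖w‖ ≤ 0 := by simpa [h] using hvle
    have hw0 : w = 0 := by
      have := norm_nonneg w
      exact norm_eq_zero.mp (le_antisymm ‹‖w‖ ≤ 0› this)
    have : v = u + w := by simp [hu, hw]
    simp [this, h, hw0]
  set u' : V := (Submodule.linearProjOfIsCompl U E hcompl (L u) : V) with hu'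
  have hu'U : u' ∈ U := (Submodule.linearProjOfIsCompl U E hcompl (L u)).2
  have hw'E : L u - u' ∈ E := by
    have := hprE (L u)
    simpa [hpr, hu'] using this
  have hLwE : L w ∈ E := hLE w hwE
  have hvdecomp : v = u + w := by simp [hu, hw]
  have hLv : L v = u' + ((L u - u') + L w) := by
    rw [hvdecomp]; rw [map_add]; abel
  rw [hC]
  refine ⟨u', hu'U, (L u - u') + L w, E.add_mem hw'E hLwE, hLv, ?_⟩
  have hkey : 2 * c₃ * ‖u‖ < ‖u'‖ := h1 u huU hu0
  have hu'pos : 0 < ‖u'‖ := lt_of_le_of_lt (by positivity) hkey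
  calc ‖(L u - u') + L w‖ ≤ ‖L u - u'‖ + ‖L w‖ := norm_add_le _ _
    _ ≤ c₄ * ‖u'‖ + c₃ * ‖w‖ := add_le_add (h2 u huU) (h3 w hwE)
    _ ≤ c₄ * ‖u'‖ + c₃ * (β * ‖u‖) := by
        have := mul_le_mul_of_nonneg_left hvle (le_of_lt hc₃)
        linarith
    _ < c₄ * ‖u'‖ + (β / 2) * ‖u'‖ := by
        have : c₃ * (β * ‖u‖) = (β / 2) * (2 * c₃ * ‖u‖) := by ring
        rw [this]
        have := mul_lt_mul_of_pos_left hkey (by positivity : (0:ℝ) < β / 2)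
        linarith
    _ < β * ‖u'‖ := by nlinarith
end
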